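/- arXiv:math/0703489 — 11 statements merged into one kernel-verified Lean document; each statement's English description precedes it below -/
import Mathlib

section
/- Let X be a non-negative absolutely continuous random variable with probability density function f, differential entropy H_X = -E[log f(X)], and weighted entropy H^w_X = -E[X log f(X)]. Then for all a > 0 and b > 0, the weighted entropy of aX + b satisfies H^w_{aX+b} = a(H^w_X + E(X) log a) + b(H_X + log a). -/
open MeasureTheory Real

/-! The substitution `x = (y - b) / a` turns the weighted entropy of `aX + b` into
`a ∫ (a x + b) · (f/a) log (f/a)`, and `(f/a) log (f/a) = (f log f - f log a) / a`.
Expanding `(a x + b)` against the two terms leaves the moments `∫ x f log f`, `∫ f log f`,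
`∫ x f` and `∫ f = 1`. -/

lemma integral_comp_sub_div_of_pos (g : ℝ → ℝ) (b : ℝ) {a : ℝ} (ha : 0 < a) :
    ∫ y, g ((y - b) / a) = a * ∫ x, g x := by
  rw [integral_sub_right_eq_self (fun y => g (y / a)) b, Measure.integral_comp_div,
    abs_of_pos ha, smul_eq_mul]

lemma mul_mul_log_mul (c y : ℝ) : c * y * log (c * y) = c * log c * y + c * (y * log y) := by
  have h := negMulLog_mul c y
  simp only [negMulLog_eq_neg] at h
  linear_combination -h

section AffineMoment

variable {g : ℝ → ℝ} (a b : ℝ)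

lemma MeasureTheory.Integrable.affine_mul (hg : Integrable g)
    (hxg : Integrable fun x => x * g x) : Integrable fun x => (a * x + b) * g x :=
  ((hxg.const_mul a).add (hg.const_mul b)).congr
    (ae_of_all _ fun x => by simp only [Pi.add_apply]; ring)

lemma integral_affine_mul (hg : Integrable g) (hxg : Integrable fun x => x * g x) :
    ∫ x, (a * x + b) * g x = a * (∫ x, x * g x) + b * ∫ x, g x := by
  calc ∫ x, (a * x + b) * g x = ∫ x, a * (x * g x) + b * g x := by congr 1 with x; ring
    _ = a * (∫ x, x * g x) + b * ∫ x, g x := by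
      rw [integral_add (hxg.const_mul a) (hg.const_mul b), integral_const_mul, integral_const_mul]

end AffineMoment

theorem weighted_entropy_affine_general (f : ℝ → ℝ) (a b : ℝ) (ha : 0 < a)
    (hf_dens : ∫ x, f x = 1)
    (hmean : Integrable (fun x => x * f x))
    (hent : Integrable (fun x => f x * Real.log (f x)))
    (hwent : Integrable (fun x => x * f x * Real.log (f x))) :
    -∫ y, y * (1 / a * f ((y - b) / a)) * Real.log (1 / a * f ((y - b) / a))
      = a * ((-∫ x, x * f x * Real.log (f x)) + (∫ x, x * f x) * Real.log a)
        + b * ((-∫ x, f x * Real.log (f x)) + Real.log a) := by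
  have hf : Integrable f := Integrable.of_integral_ne_zero (by simp [hf_dens])
  have hwent' : Integrable fun x => x * (f x * log (f x)) := by simpa only [mul_assoc] using hwent
  have hscale (y : ℝ) : a * (1 / a * y * log (1 / a * y)) = y * log y - log a * y := by
    rw [mul_mul_log_mul, one_div, log_inv]
    field_simp
    ring
  have hsubst : ∫ y, y * (1 / a * f ((y - b) / a)) * log (1 / a * f ((y - b) / a))
      = a * ∫ x, (a * x + b) * (1 / a * f x * log (1 / a * f x)) := by
    rw [← integral_comp_sub_div_of_pos _ b ha]
    congr 1 with y
    field_simp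
    ring
  have hsplit : a * ∫ x, (a * x + b) * (1 / a * f x * log (1 / a * f x))
      = (∫ x, (a * x + b) * (f x * log (f x))) - log a * ∫ x, (a * x + b) * f x := by
    rw [← integral_const_mul, ← integral_const_mul,
      ← integral_sub (hent.affine_mul a b hwent') ((hf.affine_mul a b hmean).const_mul _)]
    congr 1 with x
    rw [mul_left_comm, hscale]
    ring
  rw [hsubst, hsplit, integral_affine_mul a b hent hwent', integral_affine_mul a b hf hmean,
    hf_dens]
  simp only [mul_assoc]
  ring

/-- For a non-negative absolutely continuous random variable `X` with
density `f`, differential entropy `H_X = -E[log f(X)]` and weighted entropy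
`H^w_X = -E[X log f(X)]`, and for `a, b > 0`, the random variable `aX + b`
(whose density is `y ↦ (1/a) f((y-b)/a)`) has weighted entropy
`H^w_{aX+b} = a (H^w_X + E(X) log a) + b (H_X + log a)`. -/
theorem weighted_entropy_affine (f : ℝ → ℝ) (a b : ℝ) (ha : 0 < a) (hb : 0 < b)
    (hf_nonneg : ∀ x, 0 ≤ f x) (hf_supp : ∀ x, x < 0 → f x = 0)
    (hf_dens : ∫ x, f x = 1)
    (hmean : Integrable (fun x => x * f x))
    (hent : Integrable (fun x => f x * Real.log (f x)))
    (hwent : Integrable (fun x => x * f x * Real.log (f x))) :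
    -∫ y, y * (1 / a * f ((y - b) / a)) * Real.log (1 / a * f ((y - b) / a))
      = a * ((-∫ x, x * f x * Real.log (f x)) + (∫ x, x * f x) * Real.log a)
        + b * ((-∫ x, f x * Real.log (f x)) + Real.log a) :=
  weighted_entropy_affine_general f a b ha hf_dens hmean hent hwent
end

section
/- Let X be an absolutely continuous random variable with density f supported in the finite interval [0, ν] and mean μ = E(X) ∈ [0, ν]. Then the weighted entropy satisfies H^w ≤ μ log(ν²/(2μ)). -/
open MeasureTheory

/-- If `X` is an absolutely continuous random variable with density `f`
supported in the finite interval `[0, ν]` and mean `μ = E(X) ∈ [0, ν]`, then the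
weighted entropy `H^w = -∫ x f(x) log f(x) dx` satisfies `H^w ≤ μ log(ν² / (2μ))`. -/
theorem weighted_entropy_upper_bound (f : ℝ → ℝ) (ν μ : ℝ) (hν : 0 < ν)
    (hf_nonneg : ∀ x, 0 ≤ f x) (hf_supp : ∀ x, x ∉ Set.Icc 0 ν → f x = 0)
    (hf_dens : ∫ x, f x = 1)
    (hwent : Integrable (fun x => x * f x * Real.log (f x)))
    (hμ : μ = ∫ x, x * f x) (hμ0 : 0 ≤ μ) (hμν : μ ≤ ν) :
    -∫ x, x * f x * Real.log (f x) ≤ μ * Real.log (ν ^ 2 / (2 * μ)) := by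
  have hf_int : Integrable f := by
    by_contra h
    rw [integral_undef h] at hf_dens
    norm_num at hf_dens
  have hxf_meas : AEStronglyMeasurable (fun x => x * f x) volume :=
    aestronglyMeasurable_id.mul hf_int.1
  have hxf_int : Integrable (fun x => x * f x) := by
    refine (hf_int.const_mul ν).mono' hxf_meas ?_
    filter_upwards with x
    by_cases hx : x ∈ Set.Icc 0 ν
    · rw [Real.norm_eq_abs, abs_of_nonneg (mul_nonneg hx.1 (hf_nonneg x))]
      exact mul_le_mul_of_nonneg_right hx.2 (hf_nonneg x)
    · rw [hf_supp x hx]; simp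
  have hxf_nonneg : ∀ x, 0 ≤ x * f x := by
    intro x
    by_cases hx : x ∈ Set.Icc 0 ν
    · exact mul_nonneg hx.1 (hf_nonneg x)
    · rw [hf_supp x hx]; simp
  rcases eq_or_lt_of_le hμ0 with hμ0' | hμpos
  · -- degenerate case μ = 0
    have h0 : ∫ x, x * f x = 0 := by rw [← hμ, ← hμ0']
    have hae : (fun x => x * f x) =ᵐ[volume] 0 :=
      (integral_eq_zero_iff_of_nonneg hxf_nonneg hxf_int).mp h0
    have hz : ∫ x, x * f x * Real.log (f x) = 0 := by
      refine integral_eq_zero_of_ae ?_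
      filter_upwards [hae] with x hx
      simp only [Pi.zero_apply] at hx ⊢
      rw [hx, zero_mul]
    rw [hz, ← hμ0']
    simp
  · -- main case μ > 0
    set s : ℝ := 2 * μ / ν ^ 2 with hs_def
    have hs_pos : 0 < s := div_pos (by linarith) (by positivity)
    set g : ℝ → ℝ := Set.indicator (Set.Icc 0 ν) (fun x => x * s) with hg_def
    -- pointwise Gibbs inequality
    have hpt : ∀ x, -(x * f x * Real.log (f x)) ≤ g x - x * f x - x * f x * Real.log s := by
      intro x
      by_cases hx : x ∈ Set.Icc 0 ν
      · rw [hg_def, Set.indicator_of_mem hx]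
        rcases (hf_nonneg x).eq_or_lt with ht0 | ht
        · rw [← ht0]
          simp only [mul_zero, zero_mul, neg_zero, sub_zero]
          exact mul_nonneg hx.1 hs_pos.le
        · have hlog := Real.log_le_sub_one_of_pos (div_pos hs_pos ht)
          rw [Real.log_div hs_pos.ne' ht.ne'] at hlog
          have key : f x * (Real.log s - Real.log (f x)) ≤ s - f x := by
            have h2 : f x * (s / f x - 1) = s - f x := by field_simp
            calc f x * (Real.log s - Real.log (f x))
                ≤ f x * (s / f x - 1) := mul_le_mul_of_nonneg_left hlog ht.le
              _ = s - f x := h2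
          have := mul_le_mul_of_nonneg_left key hx.1
          nlinarith [this]
      · rw [hf_supp x hx, hg_def, Set.indicator_of_notMem hx]
        simp
    -- integrability of the right-hand side pieces
    have hg_int : Integrable g := by
      refine IntegrableOn.integrable_indicator ?_ measurableSet_Icc
      exact ((continuous_id.mul continuous_const).integrableOn_Icc)
    have hrhs_int : Integrable (fun x => g x - x * f x - x * f x * Real.log s) :=
      (hg_int.sub hxf_int).sub (hxf_int.mul_const _)
    have hmono : ∫ x, -(x * f x * Real.log (f x)) ≤
        ∫ x, (g x - x * f x - x * f x * Real.log s) :=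
      integral_mono hwent.neg hrhs_int hpt
    rw [integral_neg] at hmono
    have hgI : ∫ x, g x = μ := by
      rw [hg_def, integral_indicator measurableSet_Icc]
      have h1 : ∫ x in Set.Icc (0:ℝ) ν, x * s = (∫ x in Set.Icc (0:ℝ) ν, x) * s :=
        integral_mul_const _ _
      have h2 : ∫ x in Set.Icc (0:ℝ) ν, (x : ℝ) = ν ^ 2 / 2 := by
        rw [MeasureTheory.integral_Icc_eq_integral_Ioc,
          ← intervalIntegral.integral_of_le hν.le]
        simp [integral_id]
      rw [h1, h2, hs_def]
      field_simp
    have hsub : Integrable (fun x => g x - x * f x) := hg_int.sub hxf_int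
    have hgg : Integrable (fun x => g x) := hg_int
    have hI : ∫ x, (g x - x * f x - x * f x * Real.log s) = -(μ * Real.log s) := by
      rw [integral_sub hsub (hxf_int.mul_const _),
        integral_sub hgg hxf_int, integral_mul_const, hgI, ← hμ]
      ring
    rw [hI] at hmono
    have hfin : μ * Real.log (ν ^ 2 / (2 * μ)) = -(μ * Real.log s) := by
      rw [show ν ^ 2 / (2 * μ) = s⁻¹ by rw [hs_def]; field_simp, Real.log_inv]
      ring
    rw [hfin]
    exact hmono
end

section
/- Let X be a non-negative absolutely continuous random variable with finite mean E(X), density f, distribution function F, survival function F̄, length-biased distribution function F*(t) = (1/E(X)) ∫_0^t x f(x) dx and length-biased survival function F̄*(t) = (1/E(X)) ∫_t^∞ x f(x) dx. Then for all t in the support of f, the weighted entropy decomposes as H^w = E(X){-F*(t) log F(t) - F̄*(t) log F̄(t)} + F(t) H̄^w(t) + F̄(t) H^w(t), where H^w(t) is the weighted residual entropy and H̄^w(t) is the weighted past entropy at time t. -/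
open MeasureTheory

/-- Survival function `F̄(t) = ∫_t^∞ f(x) dx` of a density `f`. -/
noncomputable def survFn (f : ℝ → ℝ) (t : ℝ) : ℝ := ∫ x in Set.Ioi t, f x

/-- Distribution function `F(t) = ∫_{-∞}^t f(x) dx` of a density `f`. -/
noncomputable def distFn (f : ℝ → ℝ) (t : ℝ) : ℝ := ∫ x in Set.Iic t, f x

/-- Residual entropy `H(t) = -∫_t^∞ (f(x)/F̄(t)) log (f(x)/F̄(t)) dx`. -/
noncomputable def resEnt (f : ℝ → ℝ) (t : ℝ) : ℝ :=
  -∫ x in Set.Ioi t, f x / survFn f t * Real.log (f x / survFn f t)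

/-- Weighted residual entropy `H^w(t) = -∫_t^∞ x (f(x)/F̄(t)) log (f(x)/F̄(t)) dx`. -/
noncomputable def wResEnt (f : ℝ → ℝ) (t : ℝ) : ℝ :=
  -∫ x in Set.Ioi t, x * (f x / survFn f t) * Real.log (f x / survFn f t)

/-- Past entropy `H̄(t) = -∫_0^t (f(x)/F(t)) log (f(x)/F(t)) dx`. -/
noncomputable def pastEnt (f : ℝ → ℝ) (t : ℝ) : ℝ :=
  -∫ x in Set.Ioc 0 t, f x / distFn f t * Real.log (f x / distFn f t)

/-- Weighted past entropy `H̄^w(t) = -∫_0^t x (f(x)/F(t)) log (f(x)/F(t)) dx`. -/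
noncomputable def wPastEnt (f : ℝ → ℝ) (t : ℝ) : ℝ :=
  -∫ x in Set.Ioc 0 t, x * (f x / distFn f t) * Real.log (f x / distFn f t)

/-- The support `S = (0, ν)` (with `ν ≤ +∞`) as a subset of `ℝ`. -/
def supS (ν : EReal) : Set ℝ := {x : ℝ | 0 < x ∧ (x : EReal) < ν}

/-- The weighted entropy `H^w = -∫_0^∞ x f(x) log f(x) dx` of a density `f`. -/
noncomputable def wEnt (f : ℝ → ℝ) : ℝ := -∫ x in Set.Ioi 0, x * f x * Real.log (f x)


private lemma wEnt_key (c x fx : ℝ) (hc : 0 < c) (hf : 0 ≤ fx) :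
    x * (fx / c) * Real.log (fx / c)
      = (x * fx * Real.log fx) / c - (Real.log c / c) * (x * fx) := by
  rcases eq_or_lt_of_le hf with h | h
  · simp [← h]
  · rw [Real.log_div h.ne' hc.ne']
    field_simp

/-- For a non-negative absolutely continuous random variable `X` with
finite mean `E(X)`, density `f` supported on `(0, ν)`, distribution function `F`,
survival function `F̄`, length-biased distribution function
`F*(t) = (1/E(X)) ∫_0^t x f(x) dx` and length-biased survival function
`F̄*(t) = (1/E(X)) ∫_t^∞ x f(x) dx`, for all `t` in the support of `f` the weighted
entropy decomposes as
`H^w = E(X){-F*(t) log F(t) - F̄*(t) log F̄(t)} + F(t) H̄^w(t) + F̄(t) H^w(t)`. -/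
theorem wEnt_decomposition (f : ℝ → ℝ) (ν : EReal) (t : ℝ)
    (hf_nonneg : ∀ x, 0 ≤ f x)
    (hf_supp : Function.support f = supS ν)
    (hf_dens : ∫ x, f x = 1)
    (hmean : Integrable (fun x => x * f x))
    (hwent : Integrable (fun x => x * f x * Real.log (f x)))
    (ht : t ∈ supS ν) :
    wEnt f
      = (∫ x in Set.Ioi 0, x * f x) *
          (-((∫ x in Set.Ioc 0 t, x * f x) / ∫ x in Set.Ioi 0, x * f x)
              * Real.log (distFn f t)
            - ((∫ x in Set.Ioi t, x * f x) / ∫ x in Set.Ioi 0, x * f x)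
              * Real.log (survFn f t))
        + distFn f t * wPastEnt f t + survFn f t * wResEnt f t := by
  have hfi : Integrable f := by
    by_contra h
    rw [integral_undef h] at hf_dens
    exact one_ne_zero hf_dens.symm
  obtain ⟨ht0, htν⟩ := ht
  have hF : 0 < distFn f t := by
    rw [distFn, setIntegral_pos_iff_support_of_nonneg_ae
      (ae_of_all _ fun x => hf_nonneg x) hfi.integrableOn]
    refine lt_of_lt_of_le ?_ (measure_mono
      (show Set.Ioc 0 t ⊆ Function.support f ∩ Set.Iic t from ?_))
    · simp [ht0]
    · rintro x ⟨hx0, hxt⟩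
      exact ⟨hf_supp ▸ ⟨hx0, lt_of_le_of_lt (EReal.coe_le_coe_iff.2 hxt) htν⟩, hxt⟩
  obtain ⟨c, htc, hcν⟩ := exists_between htν
  have hcbot : c ≠ ⊥ := fun h => by simp [h] at htc
  have hctop : c ≠ ⊤ := fun h => (h ▸ hcν).not_ge le_top
  lift c to ℝ using ⟨hctop, hcbot⟩ with u
  have htu : t < u := EReal.coe_lt_coe_iff.1 htc
  have hFbar : 0 < survFn f t := by
    rw [survFn, setIntegral_pos_iff_support_of_nonneg_ae
      (ae_of_all _ fun x => hf_nonneg x) hfi.integrableOn]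
    refine lt_of_lt_of_le ?_ (measure_mono
      (show Set.Ioo t u ⊆ Function.support f ∩ Set.Ioi t from ?_))
    · simp [htu]
    · rintro x ⟨hx1, hx2⟩
      exact ⟨hf_supp ▸ ⟨ht0.trans hx1, lt_trans (EReal.coe_lt_coe_iff.2 hx2) hcν⟩, hx1⟩
  have hE : 0 < ∫ x in Set.Ioi 0, x * f x := by
    rw [setIntegral_pos_iff_support_of_nonneg_ae
      (ae_restrict_of_forall_mem measurableSet_Ioi fun x hx =>
        mul_nonneg (le_of_lt hx) (hf_nonneg x)) hmean.integrableOn]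
    refine lt_of_lt_of_le ?_ (measure_mono
      (show Set.Ioc 0 t ⊆ Function.support (fun x => x * f x) ∩ Set.Ioi 0 from ?_))
    · simp [ht0]
    · rintro x ⟨hx0, hxt⟩
      refine ⟨?_, hx0⟩
      have hfx : f x ≠ 0 := by
        rw [← Function.mem_support, hf_supp]
        exact ⟨hx0, lt_of_le_of_lt (EReal.coe_le_coe_iff.2 hxt) htν⟩
      exact mul_ne_zero hx0.ne' hfx
  -- past entropy identity
  have hpast : distFn f t * wPastEnt f t
      = -(∫ x in Set.Ioc 0 t, x * f x * Real.log (f x))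
        + Real.log (distFn f t) * ∫ x in Set.Ioc 0 t, x * f x := by
    have h1 : (∫ x in Set.Ioc 0 t, x * (f x / distFn f t) * Real.log (f x / distFn f t))
        = (∫ x in Set.Ioc 0 t, x * f x * Real.log (f x)) / distFn f t
          - (Real.log (distFn f t) / distFn f t) * ∫ x in Set.Ioc 0 t, x * f x := by
      simp_rw [wEnt_key (distFn f t) _ _ hF (hf_nonneg _)]
      rw [integral_sub (hwent.integrableOn.div_const _)
        (hmean.integrableOn.const_mul _), integral_div, integral_const_mul]
    rw [wPastEnt, h1]
    field_simp
    ring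
  have hres : survFn f t * wResEnt f t
      = -(∫ x in Set.Ioi t, x * f x * Real.log (f x))
        + Real.log (survFn f t) * ∫ x in Set.Ioi t, x * f x := by
    have h1 : (∫ x in Set.Ioi t, x * (f x / survFn f t) * Real.log (f x / survFn f t))
        = (∫ x in Set.Ioi t, x * f x * Real.log (f x)) / survFn f t
          - (Real.log (survFn f t) / survFn f t) * ∫ x in Set.Ioi t, x * f x := by
      simp_rw [wEnt_key (survFn f t) _ _ hFbar (hf_nonneg _)]
      rw [integral_sub (hwent.integrableOn.div_const _)
        (hmean.integrableOn.const_mul _), integral_div, integral_const_mul]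
    rw [wResEnt, h1]
    field_simp
    ring
  have hsplit : (∫ x in Set.Ioi 0, x * f x * Real.log (f x))
      = (∫ x in Set.Ioc 0 t, x * f x * Real.log (f x))
        + ∫ x in Set.Ioi t, x * f x * Real.log (f x) := by
    rw [← setIntegral_union (Set.Ioc_disjoint_Ioi le_rfl) measurableSet_Ioi
      hwent.integrableOn hwent.integrableOn, Set.Ioc_union_Ioi_eq_Ioi ht0.le]
  have hcancel : (∫ x in Set.Ioi 0, x * f x) *
      (-((∫ x in Set.Ioc 0 t, x * f x) / ∫ x in Set.Ioi 0, x * f x)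
          * Real.log (distFn f t)
        - ((∫ x in Set.Ioi t, x * f x) / ∫ x in Set.Ioi 0, x * f x)
          * Real.log (survFn f t))
      = -((∫ x in Set.Ioc 0 t, x * f x) * Real.log (distFn f t))
        - (∫ x in Set.Ioi t, x * f x) * Real.log (survFn f t) := by
    field_simp
  rw [wEnt, hsplit, hcancel, hpast, hres]
  ring
end

section
/- Let X be a non-negative absolutely continuous random variable with density f, survival function F̄, and hazard function λ(t) = f(t)/F̄(t). If λ(t) is decreasing in t on the support S of f, then for all t ∈ S the weighted residual entropy satisfies H^w(t) ≥ -δ(t) log λ(t), where δ(t) = E(X | X > t) = (1/F̄(t)) ∫_t^∞ x f(x) dx is the mean residual value. -/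
open MeasureTheory

/-- For a non-negative absolutely continuous random variable `X` with
density `f` supported on `S = (0, ν)`, survival function `F̄` and hazard function
`λ(t) = f(t)/F̄(t)`: if `λ` is decreasing on `S`, then for all `t ∈ S` the weighted
residual entropy satisfies `H^w(t) ≥ -δ(t) log λ(t)`, where
`δ(t) = E(X | X > t) = (1/F̄(t)) ∫_t^∞ x f(x) dx`. -/
theorem wResEnt_lower_bound_of_hazard_antitone (f : ℝ → ℝ) (ν : EReal)
    (hf_nonneg : ∀ x, 0 ≤ f x)
    (hf_supp : Function.support f = supS ν)
    (hf_dens : ∫ x, f x = 1)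
    (hmean : Integrable (fun x => x * f x))
    (hwent : Integrable (fun x => x * f x * Real.log (f x)))
    (hlam : AntitoneOn (fun s => f s / survFn f s) (supS ν)) :
    ∀ t ∈ supS ν,
      -((∫ x in Set.Ioi t, x * f x) / survFn f t) * Real.log (f t / survFn f t)
        ≤ wResEnt f t := by

  -- f is integrable (else the integral would be 0, not 1)
  have hfi : Integrable f := by
    by_contra h
    rw [MeasureTheory.integral_undef h] at hf_dens
    norm_num at hf_dens
  -- positivity of the survival function on the support
  have hsurv_pos : ∀ s ∈ supS ν, 0 < survFn f s := by
    intro s hs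
    obtain ⟨hs0, hsν⟩ := hs
    obtain ⟨c, hc1, hc2⟩ := exists_between hsν
    have hct : c ≠ ⊤ := ne_top_of_lt hc2
    have hcb : c ≠ ⊥ := by
      intro h; rw [h] at hc1; exact (EReal.bot_lt_coe s).not_gt hc1
    set b := c.toReal with hb
    have hbc : (b : EReal) = c := EReal.coe_toReal hct hcb
    have hsb : s < b := by
      have : (s : EReal) < (b : EReal) := by rw [hbc]; exact hc1
      exact_mod_cast this
    have hsubset : Set.Ioo s b ⊆ Function.support f ∩ Set.Ioi s := by
      intro x hx
      refine ⟨?_, hx.1⟩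
      rw [hf_supp]
      refine ⟨hs0.trans hx.1, ?_⟩
      calc (x : EReal) < (b : EReal) := by exact_mod_cast hx.2
        _ = c := hbc
        _ < ν := hc2
    have hpos : 0 < MeasureTheory.volume (Function.support f ∩ Set.Ioi s) := by
      refine lt_of_lt_of_le ?_ (measure_mono hsubset)
      rw [Real.volume_Ioo]
      exact ENNReal.ofReal_pos.mpr (by linarith)
    exact (MeasureTheory.setIntegral_pos_iff_support_of_nonneg_ae
      (Filter.Eventually.of_forall fun x => hf_nonneg x) hfi.integrableOn).mpr hpos
  intro t ht
  have ht0 : 0 < t := ht.1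
  have hFt : 0 < survFn f t := hsurv_pos t ht
  set Ft := survFn f t with hFtdef
  set L := Real.log (f t / Ft) with hL
  -- pointwise inequality on Ioi t
  have hpt : ∀ x ∈ Set.Ioi t,
      x * (f x / Ft) * Real.log (f x / Ft) ≤ (x * f x) * (L / Ft) := by
    intro x hx
    rcases eq_or_lt_of_le (hf_nonneg x) with hfx | hfx
    · simp [← hfx]
    · have hxS : x ∈ supS ν := by
        rw [← hf_supp]; exact fun h => hfx.ne' h
      have hxt : t < x := hx
      have hFx : 0 < survFn f x := hsurv_pos x hxS
      have hFle : survFn f x ≤ Ft := by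
        apply MeasureTheory.setIntegral_mono_set hfi.integrableOn
          (Filter.Eventually.of_forall fun y => hf_nonneg y)
        exact Filter.Eventually.of_forall (Set.Ioi_subset_Ioi hxt.le)
      have hlam' : f x / survFn f x ≤ f t / Ft := hlam ht hxS hxt.le
      have h1 : f x / Ft ≤ f x / survFn f x := by gcongr
      have h2 : f x / Ft ≤ f t / Ft := h1.trans hlam'
      have hlog : Real.log (f x / Ft) ≤ L := Real.log_le_log (by positivity) h2
      calc x * (f x / Ft) * Real.log (f x / Ft)
          ≤ x * (f x / Ft) * L :=
            mul_le_mul_of_nonneg_left hlog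
              (mul_nonneg (ht0.trans hxt).le (div_nonneg (hf_nonneg x) hFt.le))
        _ = (x * f x) * (L / Ft) := by field_simp
  -- rewrite the LHS integrand for integrability
  have hg_eq : ∀ x, x * (f x / Ft) * Real.log (f x / Ft)
      = (x * f x * Real.log (f x)) * (1 / Ft) - (x * f x) * (Real.log Ft / Ft) := by
    intro x
    rcases eq_or_ne (f x) 0 with hfx | hfx
    · simp [hfx]
    · rw [Real.log_div hfx hFt.ne']; field_simp
  have hgint : IntegrableOn (fun x => x * (f x / Ft) * Real.log (f x / Ft))
      (Set.Ioi t) := by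
    have : IntegrableOn (fun x => (x * f x * Real.log (f x)) * (1 / Ft)
        - (x * f x) * (Real.log Ft / Ft)) (Set.Ioi t) :=
      ((hwent.integrableOn.mul_const _).sub (hmean.integrableOn.mul_const _))
    exact this.congr_fun (fun x _ => (hg_eq x).symm) measurableSet_Ioi
  have hhint : IntegrableOn (fun x => (x * f x) * (L / Ft)) (Set.Ioi t) :=
    hmean.integrableOn.mul_const _
  have key : (∫ x in Set.Ioi t, x * (f x / Ft) * Real.log (f x / Ft))
      ≤ ∫ x in Set.Ioi t, (x * f x) * (L / Ft) :=
    MeasureTheory.setIntegral_mono_on hgint hhint measurableSet_Ioi hpt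
  have hval : (∫ x in Set.Ioi t, (x * f x) * (L / Ft))
      = (∫ x in Set.Ioi t, x * f x) * (L / Ft) :=
    MeasureTheory.integral_mul_const _ _
  rw [wResEnt]
  rw [hval] at key
  have : ((∫ x in Set.Ioi t, x * f x) / Ft) * L
      = (∫ x in Set.Ioi t, x * f x) * (L / Ft) := by ring
  linarith
end

section
/- Let X be a non-negative absolutely continuous random variable with density f and distribution function F. Then for all t in the support of f with F(t) > 0, the weighted past entropy satisfies H̄^w(t) ≤ μ(t) log(t²/(2μ(t))), where μ(t) = E(X | X ≤ t) = (1/F(t)) ∫_0^t x f(x) dx is the mean past lifetime. -/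
open MeasureTheory

/-!
Gibbs' inequality `a - b ≤ a log (a / b)`, applied pointwise to `a = x g(x)` and to the linear
weight `b = 2 m x / t²`, which has the same first moment `m = ∫₀ᵗ x g` on `(0, t]`, integrates to
`-∫₀ᵗ x g log g ≤ m log (t² / (2 m))` for every weight `g ≥ 0`. For `g = f / F(t)` this is the
bound on the weighted past entropy.
-/

open Set Real

lemma sub_inv_le_mul_log_add_mul_log {a c : ℝ} (ha : 0 ≤ a) (hc : 0 < c) :
    a - c⁻¹ ≤ a * log a + a * log c := by
  rcases ha.eq_or_lt with rfl | ha
  · simpa using hc.le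
  · have h := mul_le_mul_of_nonneg_left (one_sub_inv_le_log_of_pos (mul_pos ha hc)) ha.le
    rwa [log_mul ha.ne' hc.ne', mul_inv, mul_sub, mul_one, ← mul_assoc, mul_inv_cancel₀ ha.ne',
      one_mul, mul_add] at h

lemma setIntegral_Ioc_zero_id {t : ℝ} (ht : 0 ≤ t) : ∫ x in Ioc 0 t, x = t ^ 2 / 2 := by
  rw [← intervalIntegral.integral_of_le ht, integral_id]; ring

theorem neg_setIntegral_mul_mul_log_le {g : ℝ → ℝ} {t : ℝ} (hg : ∀ x ∈ Ioc 0 t, 0 ≤ g x)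
    (hxg : IntegrableOn (fun x => x * g x) (Ioc 0 t))
    (hxglog : IntegrableOn (fun x => x * g x * log (g x)) (Ioc 0 t)) :
    -∫ x in Ioc 0 t, x * g x * log (g x)
      ≤ (∫ x in Ioc 0 t, x * g x) * log (t ^ 2 / (2 * ∫ x in Ioc 0 t, x * g x)) := by
  set m := ∫ x in Ioc 0 t, x * g x
  have hxg_nonneg : ∀ x ∈ Ioc 0 t, 0 ≤ x * g x := fun x hx => mul_nonneg hx.1.le (hg x hx)
  obtain hm | hm : 0 = m ∨ 0 < m := (setIntegral_nonneg measurableSet_Ioc hxg_nonneg).eq_or_lt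
  · have hzero : (fun x => x * g x) =ᵐ[volume.restrict (Ioc 0 t)] 0 :=
      (setIntegral_eq_zero_iff_of_nonneg_ae
        ((ae_restrict_iff' measurableSet_Ioc).2 (ae_of_all _ hxg_nonneg)) hxg).1 hm.symm
    rw [← hm, zero_mul, neg_nonpos, integral_eq_zero_of_ae (hzero.mono fun x hx => by simp [hx])]
  have ht : 0 < t := by
    by_contra! ht
    simp [m, Ioc_eq_empty_of_le ht] at hm
  set c := t ^ 2 / (2 * m)
  have hc : 0 < c := by positivity
  have hx : IntegrableOn (fun x => c⁻¹ * x) (Ioc 0 t) :=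
    (continuous_const.mul continuous_id).integrableOn_Ioc
  have hxglogc : IntegrableOn (fun x => x * g x * log (g x) + log c * (x * g x)) (Ioc 0 t) :=
    hxglog.add (hxg.const_mul (log c))
  have hint : ∫ x in Ioc 0 t, (x * g x - c⁻¹ * x)
      ≤ ∫ x in Ioc 0 t, (x * g x * log (g x) + log c * (x * g x)) := by
    refine setIntegral_mono_on (hxg.sub hx) hxglogc measurableSet_Ioc fun x hx => ?_
    have := mul_le_mul_of_nonneg_left (sub_inv_le_mul_log_add_mul_log (hg x hx) hc) hx.1.le
    linarith
  rw [integral_sub hxg hx, integral_add hxglog (hxg.const_mul (log c)), integral_const_mul,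
    integral_const_mul, setIntegral_Ioc_zero_id ht.le] at hint
  have hcm : c⁻¹ * (t ^ 2 / 2) = m := by simp only [c, inv_div]; field_simp
  linarith

-- No side conditions are needed: `log 0 = 0` and `a / 0 = 0` make both sides vanish.
lemma mul_div_mul_log_div (x a F : ℝ) :
    x * (a / F) * log (a / F) = x * a * log a / F - log F / F * (x * a) := by
  rcases eq_or_ne a 0 with rfl | ha
  · simp
  rcases eq_or_ne F 0 with rfl | hF
  · simp
  rw [log_div ha hF]; ring

theorem wPastEnt_upper_bound_general (f : ℝ → ℝ) (t : ℝ)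
    (hf_nonneg : ∀ x, 0 ≤ f x)
    (hf_dens : ∫ x, f x = 1)
    (hwent : IntegrableOn (fun x => x * f x * Real.log (f x)) (Set.Ioc 0 t)) :
    wPastEnt f t
      ≤ (∫ x in Set.Ioc 0 t, x * f x) / distFn f t
          * Real.log (t ^ 2 / (2 * ((∫ x in Set.Ioc 0 t, x * f x) / distFn f t))) := by
  have hf : Integrable f := .of_integral_ne_zero (by simp [hf_dens])
  have hxf : IntegrableOn (fun x => x * f x) (Ioc 0 t) :=
    hf.integrableOn.continuousOn_mul_of_subset continuousOn_id isCompact_Icc measurableSet_Ioc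
      Ioc_subset_Icc_self
  have hF : 0 ≤ distFn f t := integral_nonneg hf_nonneg
  have hmean : ∫ x in Ioc 0 t, x * (f x / distFn f t)
      = (∫ x in Ioc 0 t, x * f x) / distFn f t := by
    simp_rw [← mul_div_assoc, integral_div]
  rw [← hmean]
  refine neg_setIntegral_mul_mul_log_le (fun x _ => div_nonneg (hf_nonneg x) hF) ?_ ?_
  · simp_rw [← mul_div_assoc]
    exact hxf.div_const _
  · exact ((hwent.div_const _).sub (hxf.const_mul _)).congr
      (ae_of_all _ fun x => (mul_div_mul_log_div x (f x) (distFn f t)).symm)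

/-- For a non-negative absolutely continuous random variable `X` with
density `f` supported on `(0, ν)` and distribution function `F`, for all `t` in the
support of `f` with `F(t) > 0`, the weighted past entropy satisfies
`H̄^w(t) ≤ μ(t) log(t² / (2 μ(t)))`, where
`μ(t) = E(X | X ≤ t) = (1/F(t)) ∫_0^t x f(x) dx` is the mean past lifetime. -/
theorem wPastEnt_upper_bound (f : ℝ → ℝ) (ν : EReal) (t : ℝ)
    (hf_nonneg : ∀ x, 0 ≤ f x)
    (hf_supp : Function.support f = supS ν)
    (hf_dens : ∫ x, f x = 1)
    (hwent : IntegrableOn (fun x => x * f x * Real.log (f x)) (Set.Ioc 0 t))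
    (ht : t ∈ supS ν) (hFt : 0 < distFn f t) :
    wPastEnt f t
      ≤ (∫ x in Set.Ioc 0 t, x * f x) / distFn f t
          * Real.log (t ^ 2 / (2 * ((∫ x in Set.Ioc 0 t, x * f x) / distFn f t))) :=
  wPastEnt_upper_bound_general f t hf_nonneg hf_dens hwent
end

section
/- Let X be a non-negative absolutely continuous random variable with density f, distribution function F, and reversed hazard rate τ(t) = f(t)/F(t). If τ(t) is decreasing in t on the support S of f, then for all t ∈ S the weighted past entropy satisfies H̄^w(t) ≤ ∫_0^t x τ(x) dx - μ(t)[1 + log τ(t)], where μ(t) = E(X | X ≤ t) = (1/F(t)) ∫_0^t x f(x) dx. -/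
open MeasureTheory

/-- For a non-negative absolutely continuous random variable `X` with
density `f` supported on `S = (0, ν)`, distribution function `F` and reversed hazard
rate `τ(t) = f(t)/F(t)`: if `τ` is decreasing on `S`, then for all `t ∈ S` the weighted
past entropy satisfies `H̄^w(t) ≤ ∫_0^t x τ(x) dx - μ(t)[1 + log τ(t)]`, where
`μ(t) = E(X | X ≤ t) = (1/F(t)) ∫_0^t x f(x) dx`. -/
theorem wPastEnt_upper_bound_of_revHazard_antitone (f : ℝ → ℝ) (ν : EReal)
    (hf_nonneg : ∀ x, 0 ≤ f x)
    (hf_supp : Function.support f = supS ν)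
    (hf_dens : ∫ x, f x = 1)
    (htau : AntitoneOn (fun s => f s / distFn f s) (supS ν)) :
    ∀ t ∈ supS ν,
      IntegrableOn (fun x => x * f x * Real.log (f x)) (Set.Ioc 0 t) →
      IntegrableOn (fun x => x * (f x / distFn f x)) (Set.Ioc 0 t) →
      wPastEnt f t
        ≤ (∫ x in Set.Ioc 0 t, x * (f x / distFn f x))
            - (∫ x in Set.Ioc 0 t, x * f x) / distFn f t
              * (1 + Real.log (f t / distFn f t)) := by
  intro t ht hInt1 hInt2
  obtain ⟨ht0, htν⟩ := ht
  -- f is integrable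
  have hf_int : Integrable f := by
    by_contra h
    rw [integral_undef h] at hf_dens
    exact one_ne_zero hf_dens.symm
  have hf_meas := hf_int.aestronglyMeasurable
  -- positivity of f on the support
  have hfpos : ∀ x : ℝ, 0 < x → (x : EReal) < ν → 0 < f x := by
    intro x hx1 hx2
    have hx : x ∈ Function.support f := by rw [hf_supp]; exact ⟨hx1, hx2⟩
    exact lt_of_le_of_ne (hf_nonneg x) (Ne.symm hx)
  -- positivity of the distribution function on the support
  have hF_pos : ∀ x : ℝ, 0 < x → (x : EReal) < ν → 0 < distFn f x := by
    intro x hx1 hx2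
    have hsub : Set.Ioo 0 x ⊆ Function.support f := by
      rw [hf_supp]
      intro y hy
      exact ⟨hy.1, lt_trans (by exact_mod_cast hy.2) hx2⟩
    have hnn : 0 ≤ᵐ[volume.restrict (Set.Ioo 0 x)] f :=
      Filter.Eventually.of_forall (fun y => hf_nonneg y)
    have h1 : 0 < ∫ y in Set.Ioo 0 x, f y := by
      rw [setIntegral_pos_iff_support_of_nonneg_ae hnn hf_int.integrableOn]
      rw [Set.inter_eq_self_of_subset_right hsub]
      simp [Real.volume_Ioo, hx1]
    have h2 : (∫ y in Set.Ioo 0 x, f y) ≤ ∫ y in Set.Iic x, f y := by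
      apply setIntegral_mono_set hf_int.integrableOn
        (Filter.Eventually.of_forall (fun y => hf_nonneg y))
      exact Filter.Eventually.of_forall (fun y hy => le_of_lt hy.2)
    exact lt_of_lt_of_le h1 h2
  have hFt : 0 < distFn f t := hF_pos t ht0 htν
  have hft : 0 < f t := hfpos t ht0 htν
  have hτt : 0 < f t / distFn f t := div_pos hft hFt
  -- membership of points of (0, t] in the support
  have hmemS : ∀ x ∈ Set.Ioc 0 t, x ∈ supS ν := by
    intro x hx
    refine ⟨hx.1, lt_of_le_of_lt ?_ htν⟩
    exact_mod_cast hx.2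
  -- integrability of x * f x on (0, t]
  have hxf_int : IntegrableOn (fun x => x * f x) (Set.Ioc 0 t) := by
    have hb : IntegrableOn (fun x => t * f x) (Set.Ioc 0 t) :=
      hf_int.integrableOn.const_mul t
    refine hb.mono' ((aestronglyMeasurable_id.mul hf_meas).restrict) ?_
    filter_upwards [self_mem_ae_restrict measurableSet_Ioc] with x hx
    have h1 : 0 ≤ x * f x := mul_nonneg hx.1.le (hf_nonneg x)
    rw [Real.norm_eq_abs, abs_of_nonneg h1]
    exact mul_le_mul_of_nonneg_right hx.2 (hf_nonneg x)
  -- abbreviations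
  set Ft := distFn f t with hFt_def
  set c : ℝ := 1 + Real.log (f t / Ft) with hc_def
  -- the integrand of the weighted past entropy
  set g : ℝ → ℝ := fun x => x * (f x / Ft) * Real.log (f x / Ft) with hg_def
  -- the dominating function
  set H : ℝ → ℝ := fun x => x * (f x / distFn f x) - (x * f x) * (c / Ft) with hH_def
  have hH_int : IntegrableOn H (Set.Ioc 0 t) := hInt2.sub (hxf_int.mul_const _)
  -- integrability of g
  have hg_int : IntegrableOn g (Set.Ioc 0 t) := by
    have hG : IntegrableOn
        (fun x => (x * f x * Real.log (f x)) * (1 / Ft) - (x * f x) * (Real.log Ft / Ft))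
        (Set.Ioc 0 t) := (hInt1.mul_const _).sub (hxf_int.mul_const _)
    refine hG.congr_fun ?_ measurableSet_Ioc
    intro x hx
    have hfx : 0 < f x := hfpos x hx.1 ((hmemS x hx).2)
    rw [hg_def]
    simp only
    rw [Real.log_div (ne_of_gt hfx) (ne_of_gt hFt)]
    field_simp
  -- pointwise inequality on (0, t]
  have hpt : ∀ x ∈ Set.Ioc 0 t, -g x ≤ H x := by
    intro x hx
    have hxS := hmemS x hx
    have hfx : 0 < f x := hfpos x hx.1 hxS.2
    have hFx : 0 < distFn f x := hF_pos x hx.1 hxS.2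
    have hτx : 0 < f x / distFn f x := div_pos hfx hFx
    -- monotonicity of the reversed hazard rate
    have h1 : Real.log (f t / Ft) ≤ Real.log (f x / distFn f x) :=
      Real.log_le_log hτt (htau hxS ⟨ht0, htν⟩ hx.2)
    -- log (Fx / Ft) ≥ 1 - Ft / Fx
    have h2 : 1 - Ft / distFn f x ≤ Real.log (distFn f x / Ft) := by
      have := Real.log_le_sub_one_of_pos (div_pos hFt hFx)
      have hinv : Real.log (distFn f x / Ft) = - Real.log (Ft / distFn f x) := by
        rw [← Real.log_inv]
        congr 1
        field_simp
      rw [hinv]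
      linarith
    -- log split
    have h3 : Real.log (f x / Ft) =
        Real.log (f x / distFn f x) + Real.log (distFn f x / Ft) := by
      rw [← Real.log_mul (ne_of_gt hτx) (ne_of_gt (div_pos hFx hFt))]
      congr 1
      field_simp
    have hxpos : 0 < x := hx.1
    have hcoef : 0 ≤ x * (f x / Ft) := mul_nonneg hxpos.le (div_pos hfx hFt).le
    have hsum : Real.log (f t / Ft) + (1 - Ft / distFn f x) ≤ Real.log (f x / Ft) := by
      rw [h3]; linarith
    have h4 : x * (f x / Ft) * (Real.log (f t / Ft) + (1 - Ft / distFn f x))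
        ≤ x * (f x / Ft) * Real.log (f x / Ft) :=
      mul_le_mul_of_nonneg_left hsum hcoef
    have h6 : x * (f x / Ft) * (Real.log (f t / Ft) + (1 - Ft / distFn f x))
        = x * f x * (c / Ft) - x * (f x / distFn f x) := by
      rw [hc_def]
      field_simp
      ring
    rw [hg_def, hH_def]
    simp only
    linarith [h4, h6]
  -- integrate the pointwise inequality
  have key : (∫ x in Set.Ioc 0 t, -g x) ≤ ∫ x in Set.Ioc 0 t, H x :=
    setIntegral_mono_on hg_int.neg hH_int measurableSet_Ioc hpt
  have hwpe : wPastEnt f t = ∫ x in Set.Ioc 0 t, -g x := by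
    rw [wPastEnt, integral_neg]
  have hHsplit : (∫ x in Set.Ioc 0 t, H x)
      = (∫ x in Set.Ioc 0 t, x * (f x / distFn f x))
        - (∫ x in Set.Ioc 0 t, x * f x) * (c / Ft) := by
    rw [hH_def]
    rw [integral_sub hInt2 (hxf_int.mul_const _), integral_mul_const]
  rw [hwpe]
  calc (∫ x in Set.Ioc 0 t, -g x) ≤ ∫ x in Set.Ioc 0 t, H x := key
    _ = (∫ x in Set.Ioc 0 t, x * (f x / distFn f x))
        - (∫ x in Set.Ioc 0 t, x * f x) * (c / Ft) := hHsplit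
    _ = (∫ x in Set.Ioc 0 t, x * (f x / distFn f x))
        - (∫ x in Set.Ioc 0 t, x * f x) / Ft * c := by ring
end

section
/- Let X be a non-negative absolutely continuous random variable with density f_X, survival function F̄_X and distribution function F_X, and let Y = φ(X), where φ is strictly increasing, continuous and differentiable with derivative φ'. Then for all t in the support of Y, the weighted residual entropy of Y satisfies H^w_Y(t) = H^{w,φ}(φ^{-1}(t)) + E[φ(X) log φ'(X) | X > φ^{-1}(t)], where H^{w,φ}(s) = -(1/F̄_X(s)) ∫_s^∞ φ(x) f_X(x) log(f_X(x)/F̄_X(s)) dx. -/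
open MeasureTheory

/-- Let `X` be a non-negative absolutely continuous random variable
with density `f`, and let `Y = φ(X)` with `φ` strictly increasing, continuous and
differentiable with derivative `φ'` (and inverse `ψ`), so that `Y` has density
`y ↦ f(ψ y) / φ'(ψ y)`. Then for all `t` in the support of `Y`,
`H^w_Y(t) = H^{w,φ}(φ⁻¹(t)) + E[φ(X) log φ'(X) | X > φ⁻¹(t)]`, where
`H^{w,φ}(s) = -(1/F̄_X(s)) ∫_s^∞ φ(x) f_X(x) log (f_X(x)/F̄_X(s)) dx`. -/
theorem wResEnt_comp_strictMono (f φ φ' ψ : ℝ → ℝ) (t : ℝ)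
    (hf_nonneg : ∀ x, 0 ≤ f x) (hf_supp : ∀ x, x ≤ 0 → f x = 0)
    (hf_dens : ∫ x, f x = 1)
    (hφ_mono : StrictMono φ) (hφ_cont : Continuous φ)
    (hφ_deriv : ∀ x, HasDerivAt φ (φ' x) x) (hφ'_pos : ∀ x, 0 < φ' x)
    (hψ_left : ∀ x, ψ (φ x) = x) (hψ_right : ∀ y, φ (ψ y) = y)
    (ht : 0 < survFn f (ψ t))
    (hint1 : IntegrableOn (fun x => φ x * f x * Real.log (f x)) (Set.Ioi (ψ t)))
    (hint2 : IntegrableOn (fun x => φ x * Real.log (φ' x) * f x) (Set.Ioi (ψ t)))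
    (hint3 : IntegrableOn (fun x => φ x * f x) (Set.Ioi (ψ t))) :
    wResEnt (fun y => f (ψ y) / φ' (ψ y)) t
      = -(1 / survFn f (ψ t))
            * (∫ x in Set.Ioi (ψ t), φ x * f x * Real.log (f x / survFn f (ψ t)))
        + (1 / survFn f (ψ t)) * ∫ x in Set.Ioi (ψ t), φ x * Real.log (φ' x) * f x := by
  set s := ψ t with hs_def
  set S := survFn f s with hS_def
  have hS_ne : S ≠ 0 := ne_of_gt ht
  have himg : φ '' Set.Ioi s = Set.Ioi t := by
    ext y
    constructor
    · rintro ⟨x, hx, rfl⟩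
      have h := hφ_mono hx
      rwa [hψ_right] at h
    · intro hy
      refine ⟨ψ y, ?_, hψ_right y⟩
      have : φ s < φ (ψ y) := by rw [hψ_right, hψ_right]; exact hy
      exact hφ_mono.lt_iff_lt.mp this
  have hCoV : ∀ g : ℝ → ℝ, ∫ y in Set.Ioi t, g y = ∫ x in Set.Ioi s, |φ' x| • g (φ x) := by
    intro g
    rw [← himg]
    exact integral_image_eq_integral_abs_deriv_smul measurableSet_Ioi
      (fun x _ => (hφ_deriv x).hasDerivWithinAt) (hφ_mono.injective.injOn) g
  have hSurv : survFn (fun y => f (ψ y) / φ' (ψ y)) t = S := by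
    rw [hS_def, survFn, survFn, hCoV]
    refine setIntegral_congr_fun measurableSet_Ioi (fun x _ => ?_)
    have h0 := (hφ'_pos x).ne'
    simp only [hψ_left, smul_eq_mul, abs_of_pos (hφ'_pos x)]
    field_simp
  unfold wResEnt
  rw [hSurv, hCoV]
  have hkey : ∀ x : ℝ,
      |φ' x| • (φ x * (f (ψ (φ x)) / φ' (ψ (φ x)) / S) *
        Real.log (f (ψ (φ x)) / φ' (ψ (φ x)) / S))
      = φ x * f x * Real.log (f x / S) / S - φ x * Real.log (φ' x) * f x / S := by
    intro x
    have hp := hφ'_pos x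
    simp only [hψ_left, smul_eq_mul, abs_of_pos hp]
    rcases eq_or_lt_of_le (hf_nonneg x) with h0 | h0
    · rw [← h0]; simp
    · have : f x / φ' x / S = f x / S / φ' x := by ring
      rw [this, Real.log_div (by positivity) hp.ne']
      field_simp
  rw [show (fun x => |φ' x| • ((fun y => φ x * (f (ψ y) / φ' (ψ y) / S) *
        Real.log (f (ψ y) / φ' (ψ y) / S)) (φ x)))
      = fun x => φ x * f x * Real.log (f x / S) / S - φ x * Real.log (φ' x) * f x / S
    from funext fun x => hkey x]
  have heq1 : (fun x => (φ x * f x * Real.log (f x) - Real.log S * (φ x * f x)) / S)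
      = fun x => φ x * f x * Real.log (f x / S) / S := by
    funext x
    rcases eq_or_lt_of_le (hf_nonneg x) with h0 | h0
    · rw [← h0]; simp
    · rw [Real.log_div h0.ne' hS_ne]; ring
  have h1 : IntegrableOn (fun x => φ x * f x * Real.log (f x / S) / S) (Set.Ioi s) := by
    rw [← heq1]
    exact (hint1.sub (hint3.const_mul (Real.log S))).div_const S
  have h2 : IntegrableOn (fun x => φ x * Real.log (φ' x) * f x / S) (Set.Ioi s) :=
    hint2.div_const S
  rw [integral_sub h1 h2, integral_div, integral_div]
  ring
end

section
/- Let X be a non-negative absolutely continuous random variable with density f_X and distribution function F_X, and let Y = φ(X), where φ is strictly decreasing, continuous and differentiable with derivative φ'. Then for all t in the support of Y, the weighted residual entropy of Y satisfies H^w_Y(t) = H̄^{w,φ}(φ^{-1}(t)) + E[φ(X) log(-φ'(X)) | X ≤ φ^{-1}(t)], where H̄^{w,φ}(s) = -(1/F_X(s)) ∫_0^s φ(x) f_X(x) log(f_X(x)/F_X(s)) dx. -/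
open MeasureTheory

/-! Substituting `y = φ x`, with Jacobian `|φ'|`, maps `(-∞, φ⁻¹ t)` onto `(t, ∞)`: the survival
function of `Y` at `t` becomes `F_X(φ⁻¹ t)` and the weighted residual entropy becomes an integral
over `(0, φ⁻¹ t]`, since `f_X` vanishes on `(-∞, 0]`. There the logarithm of the density
`f_X / |φ'|` splits as `log f_X - log (-φ')`. -/

open Set Real

theorem StrictAnti.image_Iio_of_surjective {φ : ℝ → ℝ} (hφ : StrictAnti φ)
    (hsurj : Function.Surjective φ) (s : ℝ) : φ '' Iio s = Ioi (φ s) := by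
  ext y
  obtain ⟨x, rfl⟩ := hsurj y
  simp [hφ.injective.mem_set_image, hφ.lt_iff_gt]

theorem setIntegral_Ioi_eq_setIntegral_Iic_of_strictAnti {φ φ' : ℝ → ℝ} (hφ : StrictAnti φ)
    (hsurj : Function.Surjective φ) (hderiv : ∀ x, HasDerivAt φ (φ' x) x) (g : ℝ → ℝ)
    (s : ℝ) : ∫ y in Ioi (φ s), g y = ∫ x in Iic s, |φ' x| * g (φ x) := by
  rw [← hφ.image_Iio_of_surjective hsurj, integral_image_eq_integral_abs_deriv_smul
    measurableSet_Iio (fun x _ => (hderiv x).hasDerivWithinAt) hφ.injective.injOn,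
    setIntegral_congr_set Iio_ae_eq_Iic]
  rfl

theorem setIntegral_Iic_eq_setIntegral_Ioc_of_nonpos {g : ℝ → ℝ} (hg : ∀ x ≤ 0, g x = 0)
    (s : ℝ) : ∫ x in Iic s, g x = ∫ x in Ioc 0 s, g x :=
  setIntegral_eq_of_subset_of_forall_sdiff_eq_zero measurableSet_Iic Ioc_subset_Iic_self
    fun x hx => hg x (not_lt.mp fun h => hx.2 ⟨h, hx.1⟩)

theorem mul_log_div_eq_sub {c y F : ℝ} (hF : F ≠ 0) :
    c * y * log (y / F) = c * y * log y - log F * (c * y) := by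
  rcases eq_or_ne y 0 with rfl | hy
  · simp
  · rw [log_div hy hF]; ring

theorem mul_log_div_div_mul_eq_sub {c y a F : ℝ} (ha : a ≠ 0) (hF : F ≠ 0) :
    c * (y / a / F) * log (y / a / F) * a
      = (1 / F) * (c * y * log (y / F)) - (1 / F) * (c * log a * y) := by
  rcases eq_or_ne y 0 with rfl | hy
  · simp
  · rw [div_div, log_div hy (mul_ne_zero ha hF), log_mul ha hF, log_div hy hF]
    field_simp
    ring

section Pushforward

variable {f φ φ' ψ : ℝ → ℝ}

theorem survFn_pushforward (hφ : StrictAnti φ) (hderiv : ∀ x, HasDerivAt φ (φ' x) x)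
    (hφ' : ∀ x, φ' x ≠ 0) (hψ_left : ∀ x, ψ (φ x) = x) (hψ_right : ∀ y, φ (ψ y) = y)
    (s : ℝ) : survFn (fun y => f (ψ y) / |φ' (ψ y)|) (φ s) = distFn f s := by
  rw [survFn, setIntegral_Ioi_eq_setIntegral_Iic_of_strictAnti hφ
    (Function.RightInverse.surjective hψ_right) hderiv, distFn]
  simp only [hψ_left, mul_div_cancel₀ _ (abs_ne_zero.mpr (hφ' _))]

theorem wResEnt_pushforward (hφ : StrictAnti φ) (hderiv : ∀ x, HasDerivAt φ (φ' x) x)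
    (hφ' : ∀ x, φ' x ≠ 0) (hψ_left : ∀ x, ψ (φ x) = x) (hψ_right : ∀ y, φ (ψ y) = y)
    (s : ℝ) : wResEnt (fun y => f (ψ y) / |φ' (ψ y)|) (φ s)
      = -∫ x in Iic s, φ x * (f x / |φ' x| / distFn f s) * log (f x / |φ' x| / distFn f s)
          * |φ' x| := by
  rw [wResEnt, survFn_pushforward hφ hderiv hφ' hψ_left hψ_right,
    setIntegral_Ioi_eq_setIntegral_Iic_of_strictAnti hφ
      (Function.RightInverse.surjective hψ_right) hderiv]
  simp only [hψ_left, mul_comm |φ' _|]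

end Pushforward

theorem wResEnt_comp_strictAnti_general (f φ φ' ψ : ℝ → ℝ) (t : ℝ)
    (hf_supp : ∀ x, x ≤ 0 → f x = 0)
    (hφ_anti : StrictAnti φ)
    (hφ_deriv : ∀ x, HasDerivAt φ (φ' x) x) (hφ'_neg : ∀ x, φ' x < 0)
    (hψ_left : ∀ x, ψ (φ x) = x) (hψ_right : ∀ y, φ (ψ y) = y)
    (ht : 0 < distFn f (ψ t))
    (hint1 : IntegrableOn (fun x => φ x * f x * Real.log (f x)) (Set.Ioc 0 (ψ t)))
    (hint2 : IntegrableOn (fun x => φ x * Real.log (-φ' x) * f x) (Set.Ioc 0 (ψ t)))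
    (hint3 : IntegrableOn (fun x => φ x * f x) (Set.Ioc 0 (ψ t))) :
    wResEnt (fun y => f (ψ y) / |φ' (ψ y)|) t
      = -(1 / distFn f (ψ t))
            * (∫ x in Set.Ioc 0 (ψ t), φ x * f x * Real.log (f x / distFn f (ψ t)))
        + (1 / distFn f (ψ t))
            * ∫ x in Set.Ioc 0 (ψ t), φ x * Real.log (-φ' x) * f x := by
  set F := distFn f (ψ t)
  have hφ' : ∀ x, φ' x ≠ 0 := fun x => (hφ'_neg x).ne
  have hint : IntegrableOn (fun x => φ x * f x * log (f x / F)) (Ioc 0 (ψ t)) := by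
    simp only [mul_log_div_eq_sub ht.ne']
    exact hint1.sub (hint3.const_mul _)
  have hsplit : ∀ x, φ x * (f x / |φ' x| / F) * log (f x / |φ' x| / F) * |φ' x|
      = (1 / F) * (φ x * f x * log (f x / F)) - (1 / F) * (φ x * log (-φ' x) * f x) := by
    intro x
    rw [mul_log_div_div_mul_eq_sub (abs_ne_zero.mpr (hφ' x)) ht.ne', log_abs, log_neg_eq_log]
  conv_lhs => rw [← hψ_right t]
  rw [wResEnt_pushforward hφ_anti hφ_deriv hφ' hψ_left hψ_right,
    setIntegral_Iic_eq_setIntegral_Ioc_of_nonpos (fun x hx => by simp [hf_supp x hx]),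
    setIntegral_congr_fun measurableSet_Ioc fun x _ => hsplit x,
    integral_sub (hint.const_mul _) (hint2.const_mul _), integral_const_mul, integral_const_mul]
  ring

/-- Let `X` be a non-negative absolutely continuous random variable
with density `f` and distribution function `F_X`, and let `Y = φ(X)` with `φ` strictly
decreasing, continuous and differentiable with derivative `φ'` (and inverse `ψ`), so
that `Y` has density `y ↦ f(ψ y) / |φ'(ψ y)|`. Then for all `t` in the support of `Y`,
`H^w_Y(t) = H̄^{w,φ}(φ⁻¹(t)) + E[φ(X) log(-φ'(X)) | X ≤ φ⁻¹(t)]`, where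
`H̄^{w,φ}(s) = -(1/F_X(s)) ∫_0^s φ(x) f_X(x) log (f_X(x)/F_X(s)) dx`. -/
theorem wResEnt_comp_strictAnti (f φ φ' ψ : ℝ → ℝ) (t : ℝ)
    (hf_nonneg : ∀ x, 0 ≤ f x) (hf_supp : ∀ x, x ≤ 0 → f x = 0)
    (hf_dens : ∫ x, f x = 1)
    (hφ_anti : StrictAnti φ) (hφ_cont : Continuous φ)
    (hφ_deriv : ∀ x, HasDerivAt φ (φ' x) x) (hφ'_neg : ∀ x, φ' x < 0)
    (hψ_left : ∀ x, ψ (φ x) = x) (hψ_right : ∀ y, φ (ψ y) = y)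
    (ht : 0 < distFn f (ψ t))
    (hint1 : IntegrableOn (fun x => φ x * f x * Real.log (f x)) (Set.Ioc 0 (ψ t)))
    (hint2 : IntegrableOn (fun x => φ x * Real.log (-φ' x) * f x) (Set.Ioc 0 (ψ t)))
    (hint3 : IntegrableOn (fun x => φ x * f x) (Set.Ioc 0 (ψ t))) :
    wResEnt (fun y => f (ψ y) / |φ' (ψ y)|) t
      = -(1 / distFn f (ψ t))
            * (∫ x in Set.Ioc 0 (ψ t), φ x * f x * Real.log (f x / distFn f (ψ t)))
        + (1 / distFn f (ψ t))
            * ∫ x in Set.Ioc 0 (ψ t), φ x * Real.log (-φ' x) * f x :=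
  wResEnt_comp_strictAnti_general f φ φ' ψ t hf_supp hφ_anti hφ_deriv hφ'_neg hψ_left hψ_right ht
    hint1 hint2 hint3
end

section
/- Let X be a non-negative absolutely continuous random variable with density f_X and distribution function F_X, and let Y = φ(X), where φ is strictly increasing, continuous and differentiable with derivative φ'. Then for all t in the support of Y, the weighted past entropy of Y satisfies H̄^w_Y(t) = H̄^{w,φ}(φ^{-1}(t)) + E[φ(X) log φ'(X) | X ≤ φ^{-1}(t)], where H̄^{w,φ}(s) = -(1/F_X(s)) ∫_0^s φ(x) f_X(x) log(f_X(x)/F_X(s)) dx. -/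
open MeasureTheory

/-- Let `X` be a non-negative absolutely continuous random variable
with density `f` and distribution function `F_X`, and let `Y = φ(X)` with `φ` strictly
increasing, continuous and differentiable with derivative `φ'` (and inverse `ψ`),
`φ` mapping non-negative values to non-negative values, so that `Y` has density
`y ↦ f(ψ y) / φ'(ψ y)`. Then for all `t` in the support of `Y`,
`H̄^w_Y(t) = H̄^{w,φ}(φ⁻¹(t)) + E[φ(X) log φ'(X) | X ≤ φ⁻¹(t)]`, where
`H̄^{w,φ}(s) = -(1/F_X(s)) ∫_0^s φ(x) f_X(x) log (f_X(x)/F_X(s)) dx`. -/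
theorem wPastEnt_comp_strictMono (f φ φ' ψ : ℝ → ℝ) (t : ℝ)
    (hf_nonneg : ∀ x, 0 ≤ f x) (hf_supp : ∀ x, x ≤ 0 → f x = 0)
    (hf_dens : ∫ x, f x = 1)
    (hφ_mono : StrictMono φ) (hφ_cont : Continuous φ)
    (hφ_nonneg : ∀ x, 0 ≤ x → 0 ≤ φ x)
    (hφ_deriv : ∀ x, HasDerivAt φ (φ' x) x) (hφ'_pos : ∀ x, 0 < φ' x)
    (hψ_left : ∀ x, ψ (φ x) = x) (hψ_right : ∀ y, φ (ψ y) = y)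
    (ht : 0 < distFn f (ψ t))
    (hint1 : IntegrableOn (fun x => φ x * f x * Real.log (f x)) (Set.Ioc 0 (ψ t)))
    (hint2 : IntegrableOn (fun x => φ x * Real.log (φ' x) * f x) (Set.Ioc 0 (ψ t)))
    (hint3 : IntegrableOn (fun x => φ x * f x) (Set.Ioc 0 (ψ t))) :
    wPastEnt (fun y => f (ψ y) / φ' (ψ y)) t
      = -(1 / distFn f (ψ t))
            * (∫ x in Set.Ioc 0 (ψ t), φ x * f x * Real.log (f x / distFn f (ψ t)))
        + (1 / distFn f (ψ t))
            * ∫ x in Set.Ioc 0 (ψ t), φ x * Real.log (φ' x) * f x := by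
  have hF_ne : distFn f (ψ t) ≠ 0 := ne_of_gt ht
  set F := distFn f (ψ t) with hFdef
  have hφ'ne : ∀ x, φ' x ≠ 0 := fun x => (hφ'_pos x).ne'
  -- change of variables helper
  have hcov : ∀ (s : Set ℝ), MeasurableSet s → ∀ g : ℝ → ℝ,
      ∫ y in φ '' s, g y = ∫ x in s, φ' x * g (φ x) := by
    intro s hs g
    rw [integral_image_eq_integral_abs_deriv_smul hs
      (fun x _ => (hφ_deriv x).hasDerivWithinAt) hφ_mono.injective.injOn g]
    refine setIntegral_congr_fun hs (fun x _ => ?_)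
    rw [abs_of_pos (hφ'_pos x)]; rfl
  -- images of intervals
  have hIic : φ '' Set.Iic (ψ t) = Set.Iic t := by
    ext y
    constructor
    · rintro ⟨x, hx, rfl⟩
      exact (hφ_mono.le_iff_le.mpr hx).trans_eq (hψ_right t)
    · intro hy
      refine ⟨ψ y, ?_, hψ_right y⟩
      have h : φ (ψ y) ≤ φ (ψ t) := by rw [hψ_right, hψ_right]; exact hy
      exact hφ_mono.le_iff_le.mp h
  have hIoc : φ '' Set.Ioc (ψ 0) (ψ t) = Set.Ioc 0 t := by
    ext y
    constructor
    · rintro ⟨x, hx, rfl⟩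
      exact ⟨(hψ_right 0) ▸ hφ_mono hx.1, (hψ_right t) ▸ hφ_mono.le_iff_le.mpr hx.2⟩
    · intro hy
      refine ⟨ψ y, ⟨?_, ?_⟩, hψ_right y⟩
      · have : φ (ψ 0) < φ (ψ y) := by rw [hψ_right, hψ_right]; exact hy.1
        exact hφ_mono.lt_iff_lt.mp this
      · have : φ (ψ y) ≤ φ (ψ t) := by rw [hψ_right, hψ_right]; exact hy.2
        exact hφ_mono.le_iff_le.mp this
  -- transformed distribution function
  have hdist : distFn (fun y => f (ψ y) / φ' (ψ y)) t = F := by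
    rw [hFdef]
    unfold distFn
    rw [← hIic, hcov _ measurableSet_Iic]
    refine setIntegral_congr_fun measurableSet_Iic (fun x _ => ?_)
    simp only [hψ_left]
    field_simp [hφ'ne x]
  have hψ0 : ψ 0 ≤ 0 := by
    have h : φ (ψ 0) ≤ φ 0 := by rw [hψ_right]; exact hφ_nonneg 0 le_rfl
    exact hφ_mono.le_iff_le.mp h
  -- main computation
  unfold wPastEnt
  rw [hdist, ← hIoc, hcov _ measurableSet_Ioc]
  simp only [hψ_left]
  have hdrop : ∫ x in Set.Ioc (ψ 0) (ψ t),
        φ' x * (φ x * (f x / φ' x / F) * Real.log (f x / φ' x / F))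
      = ∫ x in Set.Ioc 0 (ψ t),
        φ' x * (φ x * (f x / φ' x / F) * Real.log (f x / φ' x / F)) := by
    refine setIntegral_eq_of_subset_of_ae_diff_eq_zero
      measurableSet_Ioc.nullMeasurableSet (Set.Ioc_subset_Ioc_left hψ0) ?_
    filter_upwards with x hx
    have hx0 : x ≤ 0 := by
      by_contra h
      push_neg at h
      exact hx.2 ⟨h, hx.1.2⟩
    simp [hf_supp x hx0]
  rw [hdrop]
  have hpt : ∀ x, φ' x * (φ x * (f x / φ' x / F) * Real.log (f x / φ' x / F))
      = (φ x * f x * Real.log (f x / F)) / F - (φ x * Real.log (φ' x) * f x) / F := by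
    intro x
    rcases eq_or_ne (f x) 0 with h0 | h0
    · simp [h0]
    · have h1 : f x / φ' x / F = (f x / F) / φ' x := by ring
      rw [h1, Real.log_div (div_ne_zero h0 hF_ne) (hφ'ne x)]
      field_simp [hφ'ne x, hF_ne]
  simp only [hpt]
  have hA : (fun x => φ x * f x * Real.log (f x / F))
      = fun x => φ x * f x * Real.log (f x) - Real.log F * (φ x * f x) := by
    funext x
    rcases eq_or_ne (f x) 0 with h0 | h0
    · simp [h0]
    · rw [Real.log_div h0 hF_ne]; ring
  have hintA : IntegrableOn (fun x => φ x * f x * Real.log (f x / F)) (Set.Ioc 0 (ψ t)) := by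
    rw [hA]
    exact hint1.sub (hint3.const_mul (Real.log F))
  rw [integral_sub (hintA.div_const F) (hint2.div_const F), integral_div, integral_div]
  ring
end

section
/- Let X be a non-negative absolutely continuous random variable with residual entropy H(t), past entropy H̄(t), weighted residual entropy H^w(t) and weighted past entropy H̄^w(t). Then for all b > 0 and t > b: H^w_{X+b}(t) = H^w(t-b) + b H(t-b), and H̄^w_{X+b}(t) = H̄^w(t-b) + b H̄(t-b). -/
open MeasureTheory

open Real Set

/-!
Substituting `y = x - b` leaves the normalising constants `F̄(t - b)` and `F(t - b)` unchanged,
and the weight becomes `x = y + b`, so the weighted integral splits into the weighted entropy of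
`X` plus `b` times its unweighted entropy. For the past entropies the shifted range of
integration is `(-b, t - b]` rather than `(0, t - b]`, but `f` vanishes on the negative half-line.
-/

lemma setIntegral_comp_sub_right (g : ℝ → ℝ) (s : Set ℝ) (b : ℝ) :
    ∫ x in (· - b) ⁻¹' s, g (x - b) = ∫ x in s, g x :=
  (measurePreserving_sub_right volume b).setIntegral_preimage_emb
    (MeasurableEquiv.subRight b).measurableEmbedding g s

lemma setIntegral_mul_comp_sub_right {g : ℝ → ℝ} {s : Set ℝ} (hg : IntegrableOn g s)
    (hwg : IntegrableOn (fun y => y * g y) s) (b : ℝ) :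
    ∫ x in (· - b) ⁻¹' s, x * g (x - b) = (∫ y in s, y * g y) + b * ∫ y in s, g y := by
  rw [← integral_const_mul, ← integral_add hwg (hg.const_mul b),
    ← setIntegral_comp_sub_right (fun y => y * g y + b * g y) s b]
  congr 1 with x
  ring

lemma setIntegral_Ioc_eq_of_eq_zero_of_neg {h : ℝ → ℝ} {a : ℝ} (ha : a ≤ 0) (c : ℝ)
    (hh : ∀ x < 0, h x = 0) : ∫ x in Ioc a c, h x = ∫ x in Ioc 0 c, h x := by
  refine setIntegral_eq_of_subset_of_ae_sdiff_eq_zero measurableSet_Ioc.nullMeasurableSet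
    (Ioc_subset_Ioc_left ha) ?_
  filter_upwards [volume.ae_ne 0] with x hx0 ⟨⟨_, hxc⟩, hx⟩
  exact hh x <| (not_lt.1 fun hx_pos => hx ⟨hx_pos, hxc⟩).lt_of_ne hx0

lemma survFn_comp_sub (f : ℝ → ℝ) (b t : ℝ) :
    survFn (fun x => f (x - b)) t = survFn f (t - b) := by
  rw [survFn, survFn, ← setIntegral_comp_sub_right f _ b, preimage_sub_const_Ioi, sub_add_cancel]

lemma distFn_comp_sub (f : ℝ → ℝ) (b t : ℝ) :
    distFn (fun x => f (x - b)) t = distFn f (t - b) := by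
  rw [distFn, distFn, ← setIntegral_comp_sub_right f _ b, preimage_sub_const_Iic, sub_add_cancel]

-- No side conditions are needed: with `x / 0 = 0` and `log 0 = 0` both sides vanish
-- when `a = 0` or `s = 0`.
lemma div_mul_log_div (a s : ℝ) : a / s * log (a / s) = (a * log a - a * log s) / s := by
  rcases eq_or_ne a 0 with rfl | ha
  · simp
  rcases eq_or_ne s 0 with rfl | hs
  · simp
  rw [log_div ha hs]
  ring

section

variable {α : Type*} [MeasurableSpace α] {μ : Measure α} {f : α → ℝ}

lemma MeasureTheory.Integrable.div_mul_log_div (hf : Integrable f μ)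
    (hent : Integrable (fun x => f x * log (f x)) μ) (s : ℝ) :
    Integrable (fun x => f x / s * log (f x / s)) μ := by
  simp_rw [_root_.div_mul_log_div]
  exact (hent.sub (hf.mul_const _)).div_const s

lemma MeasureTheory.Integrable.mul_div_mul_log_div {w : α → ℝ}
    (hwf : Integrable (fun x => w x * f x) μ)
    (hwent : Integrable (fun x => w x * f x * log (f x)) μ) (s : ℝ) :
    Integrable (fun x => w x * (f x / s * log (f x / s))) μ := by
  simp_rw [_root_.div_mul_log_div, mul_div_assoc', mul_sub, ← mul_assoc]
  exact (hwent.sub (hwf.mul_const _)).div_const s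

end

section

variable {f : ℝ → ℝ} (b t : ℝ)

lemma wResEnt_comp_sub (hf : Integrable f) (hmean : Integrable (fun x => x * f x))
    (hent : Integrable (fun x => f x * log (f x)))
    (hwent : Integrable (fun x => x * f x * log (f x))) :
    wResEnt (fun x => f (x - b)) t = wResEnt f (t - b) + b * resEnt f (t - b) := by
  have hIoi : Ioi t = (· - b) ⁻¹' Ioi (t - b) := by
    rw [preimage_sub_const_Ioi, sub_add_cancel]
  simp only [wResEnt, resEnt, survFn_comp_sub, mul_assoc]
  set S := survFn f (t - b)
  rw [hIoi, setIntegral_mul_comp_sub_right (g := fun y => f y / S * log (f y / S))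
    (hf.div_mul_log_div hent S).integrableOn (hmean.mul_div_mul_log_div hwent S).integrableOn]
  ring

lemma wPastEnt_comp_sub (hb : 0 ≤ b) (hf_supp : ∀ x < 0, f x = 0) (hf : Integrable f)
    (hmean : Integrable (fun x => x * f x))
    (hent : Integrable (fun x => f x * log (f x)))
    (hwent : Integrable (fun x => x * f x * log (f x))) :
    wPastEnt (fun x => f (x - b)) t = wPastEnt f (t - b) + b * pastEnt f (t - b) := by
  have hIoc : Ioc 0 t = (· - b) ⁻¹' Ioc (-b) (t - b) := by
    rw [preimage_sub_const_Ioc, neg_add_cancel, sub_add_cancel]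
  have hb' : -b ≤ 0 := neg_nonpos.2 hb
  simp only [wPastEnt, pastEnt, distFn_comp_sub, mul_assoc]
  set F := distFn f (t - b)
  rw [hIoc, setIntegral_mul_comp_sub_right (g := fun y => f y / F * log (f y / F))
    (hf.div_mul_log_div hent F).integrableOn (hmean.mul_div_mul_log_div hwent F).integrableOn,
    setIntegral_Ioc_eq_of_eq_zero_of_neg hb' _ fun x hx => by simp [hf_supp x hx],
    setIntegral_Ioc_eq_of_eq_zero_of_neg hb' _ fun x hx => by simp [hf_supp x hx]]
  ring

end

theorem wEnt_shift_general (f : ℝ → ℝ) (b t : ℝ) (hb : 0 < b)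
    (hf_supp : ∀ x, x < 0 → f x = 0)
    (hf_dens : ∫ x, f x = 1)
    (hmean : Integrable (fun x => x * f x))
    (hent : Integrable (fun x => f x * Real.log (f x)))
    (hwent : Integrable (fun x => x * f x * Real.log (f x))) :
    wResEnt (fun x => f (x - b)) t = wResEnt f (t - b) + b * resEnt f (t - b)
    ∧ wPastEnt (fun x => f (x - b)) t = wPastEnt f (t - b) + b * pastEnt f (t - b) := by
  have hf : Integrable f := Integrable.of_integral_ne_zero (by simp [hf_dens])
  exact ⟨wResEnt_comp_sub b t hf hmean hent hwent,
    wPastEnt_comp_sub b t hb.le hf_supp hf hmean hent hwent⟩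

/-- Let `X` be a non-negative absolutely continuous random variable
with density `f`, residual entropy `H`, past entropy `H̄`, weighted residual entropy
`H^w` and weighted past entropy `H̄^w`. For `b > 0`, the random variable `X + b` has
density `x ↦ f(x - b)`, and for all `t > b`:
`H^w_{X+b}(t) = H^w(t-b) + b H(t-b)` and `H̄^w_{X+b}(t) = H̄^w(t-b) + b H̄(t-b)`. -/
theorem wEnt_shift (f : ℝ → ℝ) (b t : ℝ) (hb : 0 < b) (ht : b < t)
    (hf_nonneg : ∀ x, 0 ≤ f x) (hf_supp : ∀ x, x < 0 → f x = 0)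
    (hf_dens : ∫ x, f x = 1)
    (hmean : Integrable (fun x => x * f x))
    (hent : Integrable (fun x => f x * Real.log (f x)))
    (hwent : Integrable (fun x => x * f x * Real.log (f x)))
    (hsurv : 0 < survFn f (t - b)) (hdist : 0 < distFn f (t - b)) :
    wResEnt (fun x => f (x - b)) t = wResEnt f (t - b) + b * resEnt f (t - b)
    ∧ wPastEnt (fun x => f (x - b)) t = wPastEnt f (t - b) + b * pastEnt f (t - b) :=
  wEnt_shift_general f b t hb hf_supp hf_dens hmean hent hwent
end

section
/- Let X be exponentially distributed with parameter λ > 0, i.e., with density f(x) = λ e^{-λx} for x > 0. Then for all t ≥ 0 the weighted residual entropy of X equals H^w(t) = t + 2/λ - (t + 1/λ) log λ. Consequently, H^w(t) is decreasing in t if and only if λ ≥ e, and increasing in t if and only if 0 < λ ≤ e. -/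
open MeasureTheory

/-- The density of the exponential distribution with parameter `l > 0`:
`f(x) = l e^{-l x}` for `x > 0`, and `0` otherwise. -/
noncomputable def expDens (l : ℝ) : ℝ → ℝ :=
  fun x => if 0 < x then l * Real.exp (-(l * x)) else 0

/-! For `t ≥ 0` the survival function is `e^{-λt}`, so on `(t, ∞)` the ratio `f(x)/F̄(t)` is
`λ e^{-λ(x-t)}` with logarithm `log λ - λ(x-t)`. Substituting `x = t + y` turns `H^w(t)` into a
combination of the moments `∫_0^∞ yⁿ e^{-λy} dy = n!/λ^{n+1}`, `n ≤ 2`. The result is affine in `t`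
with slope `1 - log λ`, which gives both monotonicity claims. -/

open Real Set
open scoped Nat

lemma integral_pow_mul_exp_neg_mul_Ioi (n : ℕ) {r : ℝ} (hr : 0 < r) :
    ∫ x in Ioi (0 : ℝ), x ^ n * exp (-(r * x)) = n ! / r ^ (n + 1) := by
  have h := integral_rpow_mul_exp_neg_mul_Ioi (a := n + 1) (by positivity) hr
  rw [add_sub_cancel_right, Gamma_nat_eq_factorial, one_div, inv_rpow hr.le] at h
  norm_cast at h
  rw [h, div_eq_inv_mul]

lemma integrableOn_pow_mul_exp_neg_mul_Ioi (n : ℕ) {r : ℝ} (hr : 0 < r) :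
    IntegrableOn (fun x : ℝ => x ^ n * exp (-(r * x))) (Ioi 0) :=
  .of_integral_ne_zero (by rw [integral_pow_mul_exp_neg_mul_Ioi n hr]; positivity)

lemma integral_quadratic_mul_exp_neg_mul_Ioi (a b c : ℝ) {r : ℝ} (hr : 0 < r) :
    ∫ x in Ioi (0 : ℝ), (a + b * x + c * x ^ 2) * exp (-(r * x)) =
      a / r + b / r ^ 2 + 2 * c / r ^ 3 := by
  have hI (n : ℕ) (k : ℝ) := (integrableOn_pow_mul_exp_neg_mul_Ioi n hr).const_mul k
  have hsplit : (fun x : ℝ => (a + b * x + c * x ^ 2) * exp (-(r * x))) =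
      fun x => (a * (x ^ 0 * exp (-(r * x))) + b * (x ^ 1 * exp (-(r * x))))
        + c * (x ^ 2 * exp (-(r * x))) := by
    ext x; ring
  rw [hsplit, integral_add ?_ (hI 2 c), integral_add (hI 0 a) (hI 1 b),
    integral_const_mul, integral_const_mul, integral_const_mul,
    integral_pow_mul_exp_neg_mul_Ioi 0 hr, integral_pow_mul_exp_neg_mul_Ioi 1 hr,
    integral_pow_mul_exp_neg_mul_Ioi 2 hr]
  · simp only [Nat.factorial, Nat.cast_one]
    field_simp
    ring
  · exact (hI 0 a).add (hI 1 b)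

lemma setIntegral_Ioi_comp_sub_right (f : ℝ → ℝ) (t : ℝ) :
    ∫ x in Ioi t, f (x - t) = ∫ y in Ioi 0, f y := by
  have h := (measurePreserving_add_right volume t).setIntegral_image_emb
    (measurableEmbedding_addRight t) (fun x => f (x - t)) (Ioi 0)
  simp only [add_sub_cancel_right] at h
  rwa [image_add_const_Ioi, zero_add] at h

lemma antitoneOn_Ici_iff_of_eqOn_affine {f : ℝ → ℝ} {a b c : ℝ}
    (hf : EqOn f (fun t => a * t + b) (Ici c)) : AntitoneOn f (Ici c) ↔ a ≤ 0 := by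
  refine ⟨fun h => ?_, fun ha x hx y hy hxy => ?_⟩
  · have hc : c ∈ Ici c := self_mem_Ici
    have hc1 : c + 1 ∈ Ici c := by simp
    have := h hc hc1 (by linarith)
    rw [hf hc, hf hc1] at this
    linarith
  · rw [hf hx, hf hy]
    nlinarith

lemma monotoneOn_Ici_iff_of_eqOn_affine {f : ℝ → ℝ} {a b c : ℝ}
    (hf : EqOn f (fun t => a * t + b) (Ici c)) : MonotoneOn f (Ici c) ↔ 0 ≤ a := by
  refine ⟨fun h => ?_, fun ha x hx y hy hxy => ?_⟩
  · have hc : c ∈ Ici c := self_mem_Ici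
    have hc1 : c + 1 ∈ Ici c := by simp
    have := h hc hc1 (by linarith)
    rw [hf hc, hf hc1] at this
    linarith
  · rw [hf hx, hf hy]
    nlinarith

lemma expDens_of_pos {l x : ℝ} (hx : 0 < x) : expDens l x = l * exp (-(l * x)) :=
  if_pos hx

lemma survFn_expDens {l t : ℝ} (hl : 0 < l) (ht : 0 ≤ t) :
    survFn (expDens l) t = exp (-(l * t)) := by
  have hdens : EqOn (expDens l) (fun x => l * exp (-l * x)) (Ioi t) := fun x hx => by
    simp only [expDens_of_pos (ht.trans_lt hx), neg_mul]
  rw [survFn, setIntegral_congr_fun measurableSet_Ioi hdens, integral_const_mul,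
    integral_exp_mul_Ioi (neg_neg_of_pos hl)]
  field_simp

lemma expDens_div_survFn {l t x : ℝ} (hl : 0 < l) (ht : 0 ≤ t) (hx : t < x) :
    expDens l x / survFn (expDens l) t = l * exp (-(l * (x - t))) := by
  rw [expDens_of_pos (ht.trans_lt hx), survFn_expDens hl ht, mul_div_assoc, ← exp_sub]
  ring_nf

lemma wResEnt_expDens {l t : ℝ} (hl : 0 < l) (ht : 0 ≤ t) :
    wResEnt (expDens l) t = t + 2 / l - (t + 1 / l) * log l := by
  set g : ℝ → ℝ := fun y =>
    (t * l * log l + (l * log l - l ^ 2 * t) * y + (-l ^ 2) * y ^ 2) * exp (-(l * y))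
  have hshift : EqOn (fun x => x * (expDens l x / survFn (expDens l) t) *
      log (expDens l x / survFn (expDens l) t)) (fun x => g (x - t)) (Ioi t) := by
    intro x hx
    simp only [g, expDens_div_survFn hl ht hx, log_mul hl.ne' (exp_pos _).ne', log_exp]
    ring
  rw [wResEnt, setIntegral_congr_fun measurableSet_Ioi hshift, setIntegral_Ioi_comp_sub_right g,
    integral_quadratic_mul_exp_neg_mul_Ioi _ _ _ hl]
  field_simp
  ring

/-- Let `X` be exponentially distributed with parameter `λ > 0`.
Then for all `t ≥ 0` the weighted residual entropy of `X` equals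
`H^w(t) = t + 2/λ - (t + 1/λ) log λ`. Consequently, `H^w(t)` is decreasing in `t`
if and only if `λ ≥ e`, and increasing in `t` if and only if `0 < λ ≤ e`. -/
theorem exponential_wResEnt (l : ℝ) (hl : 0 < l) :
    (∀ t : ℝ, 0 ≤ t →
        wResEnt (expDens l) t = t + 2 / l - (t + 1 / l) * Real.log l)
    ∧ (AntitoneOn (wResEnt (expDens l)) (Set.Ici 0) ↔ Real.exp 1 ≤ l)
    ∧ (MonotoneOn (wResEnt (expDens l)) (Set.Ici 0) ↔ 0 < l ∧ l ≤ Real.exp 1) := by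
  have hformula (t : ℝ) (ht : 0 ≤ t) := wResEnt_expDens hl ht
  have haffine : EqOn (wResEnt (expDens l))
      (fun t => (1 - log l) * t + (2 - log l) / l) (Ici 0) := by
    intro t ht
    rw [hformula t ht]
    field_simp
    ring
  refine ⟨hformula, ?_, ?_⟩
  · rw [antitoneOn_Ici_iff_of_eqOn_affine haffine, sub_nonpos, le_log_iff_exp_le hl]
  · rw [monotoneOn_Ici_iff_of_eqOn_affine haffine, sub_nonneg, log_le_iff_le_exp hl,
      and_iff_right hl]
end
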